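/- arXiv:2307.07902 — 5 statements merged into one kernel-verified Lean document; each statement's English description precedes it below -/
import Mathlib

section
/- For a sequence M of positive reals, ω_M(t) < ∞ for all t ≥ 0 if and only if lim_{p→∞} (M_p)^{1/p} = +∞. -/
open Filter

noncomputable def omegaM (M : ℕ → ℝ) (t : ℝ) : EReal :=
  ⨆ p : ℕ, (Real.log (M 0 * t ^ p / M p) : EReal)

open Real Set

/-! With `s = log t`, `ω_M(t) < ∞` says that `p ↦ p s - log M_p` is bounded above. Asking this
for every real `s` is the same as `log M_p / p → ∞`, and `M_p ^ (1/p) = exp (log M_p / p)`. -/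

theorem EReal.iSup_coe_lt_top_iff {ι : Sort*} (f : ι → ℝ) :
    ⨆ i, (f i : EReal) < ⊤ ↔ BddAbove (range f) := by
  constructor
  · intro h
    obtain ⟨b, hb, -⟩ := EReal.lt_iff_exists_real_btwn.1 h
    refine ⟨b, forall_mem_range.2 fun i => EReal.coe_le_coe_iff.1 ?_⟩
    exact (le_iSup (fun i => (f i : EReal)) i).trans hb.le
  · rintro ⟨b, hb⟩
    exact (iSup_le fun i => EReal.coe_le_coe_iff.2 (hb (mem_range_self i))).trans_lt
      (EReal.coe_lt_top b)

theorem tendsto_div_natCast_atTop_iff_bddAbove (a : ℕ → ℝ) :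
    Tendsto (fun p : ℕ => a p / p) atTop atTop ↔
      ∀ s : ℝ, BddAbove (range fun p : ℕ => p * s - a p) := by
  constructor
  · intro h s
    refine IsBoundedUnder.bddAbove_range (isBoundedUnder_of_eventually_le (a := 0) ?_)
    filter_upwards [h.eventually_ge_atTop s, eventually_gt_atTop 0] with p hs hp
    rw [le_div_iff₀ (Nat.cast_pos.2 hp)] at hs
    linarith
  · intro h
    refine tendsto_atTop.2 fun C => ?_
    obtain ⟨K, hK⟩ := h (C + 1)
    filter_upwards [eventually_ge_atTop ⌈K⌉₊, eventually_gt_atTop 0] with p hK' hp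
    rw [le_div_iff₀ (Nat.cast_pos.2 hp)]
    have hKp : K ≤ p := Nat.ceil_le.1 hK'
    have := hK (mem_range_self p)
    linarith

theorem omegaM_lt_top_iff_of_pos {M : ℕ → ℝ} (hM : ∀ p, 0 < M p) {t : ℝ} (ht : 0 < t) :
    omegaM M t < ⊤ ↔ BddAbove (range fun p : ℕ => p * log t - log (M p)) := by
  have hlog : (fun p : ℕ => log (M 0 * t ^ p / M p)) =
      OrderIso.addLeft (log (M 0)) ∘ fun p : ℕ => p * log t - log (M p) := by
    ext p
    rw [log_div (mul_pos (hM 0) (pow_pos ht p)).ne' (hM p).ne',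
      log_mul (hM 0).ne' (pow_pos ht p).ne', log_pow]
    simp only [Function.comp_apply, OrderIso.addLeft_apply]
    ring
  rw [omegaM, EReal.iSup_coe_lt_top_iff, hlog, range_comp, OrderIso.bddAbove_image]

-- At `t = 0` every term is `log 1` or one of the junk values `log 0 = 0`.
theorem omegaM_zero_lt_top (M : ℕ → ℝ) : omegaM M 0 < ⊤ := by
  refine (EReal.iSup_coe_lt_top_iff _).2 ⟨0, forall_mem_range.2 fun p => ?_⟩
  rcases p with _ | p
  · simp [log_div_self]
  · simp

theorem omega_finite_iff_roots_tendsto_top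
    (M : ℕ → ℝ) (hM : ∀ p, 0 < M p) :
    (∀ t : ℝ, 0 ≤ t → omegaM M t < ⊤) ↔
      Tendsto (fun p : ℕ => (M p) ^ (1 / (p : ℝ))) atTop atTop := by
  have hroot : ∀ p : ℕ, M p ^ (1 / (p : ℝ)) = exp (log (M p) / p) := fun p => by
    rw [rpow_def_of_pos (hM p), mul_one_div]
  simp_rw [hroot, tendsto_exp_comp_atTop, tendsto_div_natCast_atTop_iff_bddAbove]
  constructor
  · intro h s
    simpa using (omegaM_lt_top_iff_of_pos hM (exp_pos s)).1 (h _ (exp_pos s).le)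
  · intro h t ht
    rcases ht.eq_or_lt with rfl | ht
    · exact omegaM_zero_lt_top M
    · exact (omegaM_lt_top_iff_of_pos hM ht).2 (h _)
end

section
/- Let M be a sequence of positive reals with lim (M_p)^{1/p} = ∞. The sequence M̲_p := M_0 · sup_{t>0} t^p / exp(ω_M(t)) is log-convex, i.e. M̲_p^2 ≤ M̲_{p-1} M̲_{p+1} for all p ≥ 1. -/
open Filter

noncomputable def omegaR (M : ℕ → ℝ) (t : ℝ) : ℝ :=
  ⨆ p : ℕ, Real.log (M 0 * t ^ p / M p)

noncomputable def Munder (M : ℕ → ℝ) (p : ℕ) : ℝ :=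
  M 0 * ⨆ t : {t : ℝ // 0 < t}, ((t : ℝ) ^ p / Real.exp (omegaR M t))

lemma omega_bddAbove (M : ℕ → ℝ) (hM : ∀ p, 0 < M p)
    (hinf : Tendsto (fun p : ℕ => (M p) ^ (1 / (p : ℝ))) atTop atTop)
    {t : ℝ} (ht : 0 < t) :
    BddAbove (Set.range fun q : ℕ => Real.log (M 0 * t ^ q / M q)) := by
  obtain ⟨N, hN⟩ := (hinf.eventually_ge_atTop (t + 1)).exists_forall_of_atTop
  set K := max N 1 with hK
  have hkey : ∀ q, K < q → t ^ q < M q := by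
    intro q hq
    have hq1 : 1 ≤ q := le_trans (le_max_right N 1) hq.le
    have hqN : N ≤ q := le_trans (le_max_left N 1) hq.le
    have h1 : t + 1 ≤ M q ^ (1 / (q : ℝ)) := hN q hqN
    have hq0 : (q : ℝ) ≠ 0 := Nat.cast_ne_zero.mpr (by omega)
    have hMq : (M q ^ (1 / (q : ℝ))) ^ q = M q := by
      rw [← Real.rpow_natCast (M q ^ (1 / (q : ℝ))) q, ← Real.rpow_mul (hM q).le,
        one_div_mul_cancel hq0, Real.rpow_one]
    calc t ^ q < (t + 1) ^ q := by
          exact pow_lt_pow_left₀ (lt_add_one t) ht.le (by omega)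
      _ ≤ (M q ^ (1 / (q : ℝ))) ^ q := by
          exact pow_le_pow_left₀ (by linarith) h1 q
      _ = M q := hMq
  refine ⟨max (Real.log (M 0))
      ((Finset.range (K + 1)).sup' ⟨0, Finset.mem_range.mpr (Nat.succ_pos K)⟩
        fun q => Real.log (M 0 * t ^ q / M q)), ?_⟩
  rintro x ⟨q, rfl⟩
  by_cases hq : q ≤ K
  · exact le_max_of_le_right
      (Finset.le_sup' (fun q => Real.log (M 0 * t ^ q / M q))
        (Finset.mem_range_succ_iff.mpr hq))
  · push_neg at hq
    refine le_max_of_le_left ?_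
    have h1 : t ^ q < M q := hkey q hq
    have h2 : M 0 * t ^ q / M q ≤ M 0 := by
      rw [div_le_iff₀ (hM q)]
      nlinarith [hM 0, pow_pos ht q]
    exact Real.log_le_log (div_pos (mul_pos (hM 0) (pow_pos ht q)) (hM q)) h2

lemma g_bddAbove (M : ℕ → ℝ) (hM : ∀ p, 0 < M p)
    (hinf : Tendsto (fun p : ℕ => (M p) ^ (1 / (p : ℝ))) atTop atTop) (p : ℕ) :
    BddAbove (Set.range fun t : {t : ℝ // 0 < t} =>
      (t : ℝ) ^ p / Real.exp (omegaR M t)) := by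
  refine ⟨M p / M 0, ?_⟩
  rintro x ⟨⟨t, ht⟩, rfl⟩
  have h1 : Real.log (M 0 * t ^ p / M p) ≤ omegaR M t :=
    le_ciSup (omega_bddAbove M hM hinf ht) p
  have hpos : 0 < M 0 * t ^ p / M p := div_pos (mul_pos (hM 0) (pow_pos ht p)) (hM p)
  have h2 : M 0 * t ^ p / M p ≤ Real.exp (omegaR M t) := by
    calc M 0 * t ^ p / M p = Real.exp (Real.log (M 0 * t ^ p / M p)) :=
          (Real.exp_log hpos).symm
      _ ≤ Real.exp (omegaR M t) := Real.exp_le_exp.mpr h1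
  have h3 : t ^ p / Real.exp (omegaR M t) ≤ t ^ p / (M 0 * t ^ p / M p) :=
    div_le_div_of_nonneg_left (by positivity) hpos h2
  calc t ^ p / Real.exp (omegaR M t) ≤ t ^ p / (M 0 * t ^ p / M p) := h3
    _ = M p / M 0 := by
        rw [div_div_eq_mul_div, mul_comm (M 0), mul_div_mul_left _ _ (pow_pos ht p).ne']

theorem Munder_logconvex
    (M : ℕ → ℝ) (hM : ∀ p, 0 < M p)
    (hinf : Tendsto (fun p : ℕ => (M p) ^ (1 / (p : ℝ))) atTop atTop) :
    ∀ p : ℕ, 1 ≤ p → (Munder M p) ^ 2 ≤ Munder M (p - 1) * Munder M (p + 1) := by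
  intro p hp
  haveI : Nonempty {t : ℝ // 0 < t} := ⟨⟨1, one_pos⟩⟩
  set g : ℕ → {t : ℝ // 0 < t} → ℝ :=
    fun n t => (t : ℝ) ^ n / Real.exp (omegaR M t) with hg
  have hbdd : ∀ n, BddAbove (Set.range (g n)) := fun n => g_bddAbove M hM hinf n
  have hgpos : ∀ n t, 0 < g n t := fun n t => by
    exact div_pos (pow_pos t.2 n) (Real.exp_pos _)
  set S : ℕ → ℝ := fun n => ⨆ t, g n t with hS
  have hSnn : ∀ n, 0 ≤ S n := fun n =>
    le_trans (hgpos n ⟨1, one_pos⟩).le (le_ciSup (hbdd n) ⟨1, one_pos⟩)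
  have key : S p ≤ Real.sqrt (S (p - 1) * S (p + 1)) := by
    apply ciSup_le
    intro t
    have heq : (g p t) ^ 2 = g (p - 1) t * g (p + 1) t := by
      have h1 : (t : ℝ) ^ (p - 1) * (t : ℝ) ^ (p + 1) = ((t : ℝ) ^ p) ^ 2 := by
        rw [← pow_add, ← pow_mul]
        congr 1
        omega
      simp only [hg, div_pow, div_mul_div_comm, h1, sq (Real.exp _)]
    rw [Real.le_sqrt (hgpos p t).le, heq]
    · exact mul_le_mul (le_ciSup (hbdd _) t) (le_ciSup (hbdd _) t)
        (hgpos _ t).le (hSnn _)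
    · exact mul_nonneg (hSnn _) (hSnn _)
  have key2 : S p ^ 2 ≤ S (p - 1) * S (p + 1) := by
    have := pow_le_pow_left₀ (hSnn p) key 2
    rwa [Real.sq_sqrt (mul_nonneg (hSnn _) (hSnn _))] at this
  have hMun : ∀ n, Munder M n = M 0 * S n := fun n => rfl
  rw [hMun, hMun, hMun]
  calc (M 0 * S p) ^ 2 = M 0 ^ 2 * S p ^ 2 := by ring
    _ ≤ M 0 ^ 2 * (S (p - 1) * S (p + 1)) := by
        exact mul_le_mul_of_nonneg_left key2 (sq_nonneg _)
    _ = M 0 * S (p - 1) * (M 0 * S (p + 1)) := by ring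
end

section
/- Let M be a sequence of positive reals with 0 < liminf (M_p)^{1/p} < limsup (M_p)^{1/p} = +∞. Then there is no log-convex sequence L of positive reals equivalent to M, where equivalence means there exists C ≥ 1 with C^{-(p+1)} L_p ≤ M_p ≤ C^{p+1} L_p for all p. -/
open Filter

lemma aux_root_tendsto' {C A R : ℝ} (hC : 0 < C) (hA : 0 < A) (hR : 0 < R) :
    Tendsto (fun p : ℕ => (C ^ (p + 1) * A * R ^ p) ^ (1 / (p : ℝ))) atTop (nhds (C * R)) := by
  have h1 : Tendsto (fun p : ℕ => C ^ (((p : ℝ) + 1) / p)) atTop (nhds C) := by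
    have he : Tendsto (fun p : ℕ => ((p : ℝ) + 1) / p) atTop (nhds 1) := by
      have h0 : Tendsto (fun p : ℕ => 1 + 1 / (p : ℝ)) atTop (nhds (1 + 0)) :=
        tendsto_const_nhds.add tendsto_one_div_atTop_nhds_zero_nat
      rw [add_zero] at h0
      apply h0.congr'
      filter_upwards [eventually_ge_atTop 1] with p hp
      have hp0 : (p : ℝ) ≠ 0 := by positivity
      field_simp
    have := tendsto_const_nhds.rpow he (Or.inl hC.ne')
    simpa using this
  have h2 : Tendsto (fun p : ℕ => A ^ (1 / (p : ℝ))) atTop (nhds 1) := by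
    have := tendsto_const_nhds.rpow tendsto_one_div_atTop_nhds_zero_nat (Or.inl hA.ne')
    simpa using this
  have key : Tendsto (fun p : ℕ => C ^ (((p : ℝ) + 1) / p) * A ^ (1 / (p : ℝ)) * R)
      atTop (nhds (C * R)) := by
    have := (h1.mul h2).mul_const R
    simpa using this
  apply key.congr'
  filter_upwards [eventually_ge_atTop 1] with p hp
  have hp0 : (0 : ℝ) < p := by exact_mod_cast hp
  have e1 : (C ^ (p + 1) * A * R ^ p) ^ (1 / (p : ℝ))
      = (C ^ (p + 1) : ℝ) ^ (1 / (p : ℝ)) * A ^ (1 / (p : ℝ)) * (R ^ p : ℝ) ^ (1 / (p : ℝ)) := by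
    rw [Real.mul_rpow (by positivity) (by positivity), Real.mul_rpow (by positivity) hA.le]
  rw [e1]
  congr 1
  · congr 1
    rw [← Real.rpow_natCast C (p + 1), ← Real.rpow_mul hC.le]
    congr 1
    push_cast
    field_simp
  · rw [← Real.rpow_natCast R p, ← Real.rpow_mul hR.le]
    rw [mul_one_div, div_self hp0.ne', Real.rpow_one]

theorem no_equivalent_logconvex_sequence
    (M : ℕ → ℝ) (hM : ∀ p, 0 < M p) (l : ℝ) (hlpos : 0 < l)
    (hliminf : liminf (fun p : ℕ => ((M p ^ (1 / (p : ℝ)) : ℝ) : EReal)) atTop = (l : EReal))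
    (hlimsup : limsup (fun p : ℕ => ((M p ^ (1 / (p : ℝ)) : ℝ) : EReal)) atTop = ⊤) :
    ¬ ∃ L : ℕ → ℝ, (∀ p, 0 < L p) ∧
        (∀ p : ℕ, 1 ≤ p → (L p) ^ 2 ≤ L (p - 1) * L (p + 1)) ∧
        (∃ C : ℝ, 1 ≤ C ∧ ∀ p : ℕ, (C ^ (p + 1))⁻¹ * L p ≤ M p ∧ M p ≤ C ^ (p + 1) * L p) := by
  rintro ⟨L, hLpos, hconv, C, hC1, hLM⟩
  have hC0 : (0 : ℝ) < C := lt_of_lt_of_le one_pos hC1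
  set r : ℕ → ℝ := fun p => L (p + 1) / L p with hr_def
  have hrpos : ∀ p, 0 < r p := fun p => div_pos (hLpos (p + 1)) (hLpos p)
  have hrmono : Monotone r := by
    apply monotone_nat_of_le_succ
    intro p
    have h := hconv (p + 1) (by omega)
    simp only [Nat.add_sub_cancel] at h
    rw [hr_def]
    rw [div_le_div_iff₀ (hLpos p) (hLpos (p + 1))]
    nlinarith [hLpos p, hLpos (p + 1), hLpos (p + 2)]
  by_cases hbdd : ∃ R : ℝ, ∀ p, r p ≤ R
  · -- bounded case: contradiction with limsup = ⊤
    obtain ⟨R, hR⟩ := hbdd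
    set R' : ℝ := max R 1 with hR'def
    have hR'1 : (1 : ℝ) ≤ R' := le_max_right _ _
    have hR'0 : (0 : ℝ) < R' := lt_of_lt_of_le one_pos hR'1
    have hR' : ∀ p, r p ≤ R' := fun p => (hR p).trans (le_max_left _ _)
    have hL_le : ∀ p, L p ≤ L 0 * R' ^ p := by
      intro p
      induction p with
      | zero => simp
      | succ n ih =>
        have h1 : L (n + 1) ≤ R' * L n := by
          have := hR' n
          rw [hr_def, div_le_iff₀ (hLpos n)] at this
          linarith [this]
        calc L (n + 1) ≤ R' * L n := h1
          _ ≤ R' * (L 0 * R' ^ n) := by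
              apply mul_le_mul_of_nonneg_left ih hR'0.le
          _ = L 0 * R' ^ (n + 1) := by ring
    have htend := aux_root_tendsto' hC0 (hLpos 0) hR'0
    have hev : ∀ᶠ p : ℕ in atTop, M p ^ (1 / (p : ℝ)) ≤ C * R' + 1 := by
      have hev1 : ∀ᶠ p : ℕ in atTop,
          (C ^ (p + 1) * L 0 * R' ^ p : ℝ) ^ (1 / (p : ℝ)) ≤ C * R' + 1 :=
        htend.eventually_le_const (by linarith)
      filter_upwards [hev1] with p hp
      refine le_trans ?_ hp
      apply Real.rpow_le_rpow (hM p).le _ (by positivity)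
      calc M p ≤ C ^ (p + 1) * L p := (hLM p).2
        _ ≤ C ^ (p + 1) * (L 0 * R' ^ p) :=
            mul_le_mul_of_nonneg_left (hL_le p) (by positivity)
        _ = C ^ (p + 1) * L 0 * R' ^ p := by ring
    have hls : limsup (fun p : ℕ => ((M p ^ (1 / (p : ℝ)) : ℝ) : EReal)) atTop
        ≤ ((C * R' + 1 : ℝ) : EReal) := by
      have : limsup (fun p : ℕ => ((M p ^ (1 / (p : ℝ)) : ℝ) : EReal)) atTop
          ≤ limsup (fun _ : ℕ => ((C * R' + 1 : ℝ) : EReal)) atTop := by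
        apply limsup_le_limsup ?_ ?_ ?_
        · filter_upwards [hev] with p hp
          exact_mod_cast hp
        · isBoundedDefault
        · isBoundedDefault
      simpa [limsup_const] using this
    rw [hlimsup] at hls
    exact (EReal.coe_lt_top _).not_ge hls
  · -- unbounded case: contradiction with liminf = l
    push_neg at hbdd
    set K : ℝ := C * (l + 1) with hKdef
    have hK0 : 0 < K := mul_pos hC0 (by linarith)
    obtain ⟨N, hN⟩ := hbdd K
    have hrK : ∀ p, N ≤ p → K ≤ r p := fun p hp => (hN.le).trans (hrmono hp)
    have hLge : ∀ p, N ≤ p → L N * K ^ (p - N) ≤ L p := by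
      intro p hp
      induction p, hp using Nat.le_induction with
      | base => simp
      | succ n hn ih =>
        have h1 : K * L n ≤ L (n + 1) := by
          have := hrK n hn
          rw [hr_def, le_div_iff₀ (hLpos n)] at this
          linarith [this]
        have h2 : n + 1 - N = (n - N) + 1 := by omega
        calc L N * K ^ (n + 1 - N) = K * (L N * K ^ (n - N)) := by rw [h2]; ring
          _ ≤ K * L n := mul_le_mul_of_nonneg_left ih hK0.le
          _ ≤ L (n + 1) := h1
    -- lower bound sequence tends to K / C = l + 1
    have hCinv : (0 : ℝ) < C⁻¹ := by positivity
    have hAN : (0 : ℝ) < L N / K ^ N := div_pos (hLpos N) (pow_pos hK0 N)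
    have htend : Tendsto (fun p : ℕ => ((C ^ (p + 1))⁻¹ * (L N * K ^ (p - N)) : ℝ) ^ (1 / (p : ℝ)))
        atTop (nhds (l + 1)) := by
      have h0 := aux_root_tendsto' hCinv hAN hK0
      have hlim : C⁻¹ * K = l + 1 := by
        rw [hKdef]; field_simp
      rw [hlim] at h0
      apply h0.congr'
      filter_upwards [eventually_ge_atTop N] with p hp
      congr 1
      rw [inv_pow]
      have : K ^ (p - N) = K ^ p / K ^ N := by
        rw [eq_div_iff (by positivity), ← pow_add]
        congr 1
        omega
      rw [this]
      field_simp
    have hev : ∀ᶠ p : ℕ in atTop, l + 1/2 ≤ M p ^ (1 / (p : ℝ)) := by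
      have hev1 : ∀ᶠ p : ℕ in atTop,
          l + 1/2 ≤ ((C ^ (p + 1))⁻¹ * (L N * K ^ (p - N)) : ℝ) ^ (1 / (p : ℝ)) :=
        htend.eventually_const_le (by linarith)
      filter_upwards [hev1, eventually_ge_atTop N] with p hp1 hp2
      refine hp1.trans ?_
      apply Real.rpow_le_rpow
        (mul_pos (by positivity) (mul_pos (hLpos N) (pow_pos hK0 _))).le _ (by positivity)
      calc (C ^ (p + 1))⁻¹ * (L N * K ^ (p - N))
          ≤ (C ^ (p + 1))⁻¹ * L p :=
            mul_le_mul_of_nonneg_left (hLge p hp2) (by positivity)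
        _ ≤ M p := (hLM p).1
    have hli : ((l + 1/2 : ℝ) : EReal)
        ≤ liminf (fun p : ℕ => ((M p ^ (1 / (p : ℝ)) : ℝ) : EReal)) atTop := by
      have : liminf (fun _ : ℕ => ((l + 1/2 : ℝ) : EReal)) atTop
          ≤ liminf (fun p : ℕ => ((M p ^ (1 / (p : ℝ)) : ℝ) : EReal)) atTop := by
        apply liminf_le_liminf ?_ ?_ ?_
        · filter_upwards [hev] with p hp
          exact_mod_cast hp
        · isBoundedDefault
        · isBoundedDefault
      simpa [liminf_const] using this
    rw [hliminf] at hli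
    rw [EReal.coe_le_coe_iff] at hli
    linarith
end

section
/- Let M be a sequence of positive reals with 0 < L := liminf (M_p)^{1/p} < ∞, and let M^{lc} denote the log-convex minorant of M (the pointwise largest log-convex sequence ≤ M). Then lim_{p→∞} (M^{lc}_p)^{1/p} = L. -/
open Filter

noncomputable def Mlc (M : ℕ → ℝ) (p : ℕ) : ℝ :=
  sSup {x : ℝ | ∃ L : ℕ → ℝ, (∀ q, 0 < L q) ∧
    (∀ q : ℕ, 1 ≤ q → (L q) ^ 2 ≤ L (q - 1) * L (q + 1)) ∧
    (∀ q, L q ≤ M q) ∧ x = L p}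

/-!
For a positive log-convex sequence `L`, `log L` has nondecreasing increments, which gives
`L p ^ q ≤ L 0 ^ (q - p) * L q ^ p` for `p ≤ q`. Applied with `q` from a subsequence along which
`M q ≤ b ^ q` (any `b > l`), this bounds every log-convex minorant by `max 1 (M 0) * b ^ p`.
Conversely, for `0 < c < l` eventually `c ^ p ≤ M p`, so a geometric sequence `a * c ^ p`, which is
log-convex, lies below `M` and hence below `Mlc M`. Taking `p`-th roots, `a ^ (1 / p) → 1`.
-/

def IsLogConvexSeq (L : ℕ → ℝ) : Prop :=
  ∀ q, 1 ≤ q → L q ^ 2 ≤ L (q - 1) * L (q + 1)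

lemma mul_le_of_monotone_succ_sub {f : ℕ → ℝ} (hf : Monotone fun i => f (i + 1) - f i)
    {p q : ℕ} (hpq : p ≤ q) :
    (q : ℝ) * f p ≤ ((q : ℝ) - p) * f 0 + p * f q := by
  set g : ℕ → ℝ := fun i => f (i + 1) - f i
  have hleft : f p - f 0 ≤ p * g (p - 1) := by
    have h := Finset.sum_le_card_nsmul (Finset.range p) g (g (p - 1))
      fun i hi => hf (by simp only [Finset.mem_range] at hi; omega)
    rwa [Finset.sum_range_sub, Finset.card_range, nsmul_eq_mul] at h
  have hright : ((q : ℝ) - p) * g (p - 1) ≤ f q - f p := by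
    have h := Finset.card_nsmul_le_sum (Finset.Ico p q) g (g (p - 1))
      fun i hi => hf (by simp only [Finset.mem_Ico] at hi; omega)
    rwa [Finset.sum_Ico_eq_sub _ hpq, Finset.sum_range_sub, Finset.sum_range_sub, Nat.card_Ico,
      nsmul_eq_mul, Nat.cast_sub hpq, sub_sub_sub_cancel_right] at h
  have hqp : (0 : ℝ) ≤ q - p := sub_nonneg.2 (Nat.cast_le.2 hpq)
  nlinarith [mul_le_mul_of_nonneg_left hleft hqp, mul_le_mul_of_nonneg_left hright p.cast_nonneg]

namespace IsLogConvexSeq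

variable {L : ℕ → ℝ}

lemma monotone_log_succ_sub_log (hL : IsLogConvexSeq L) (hpos : ∀ q, 0 < L q) :
    Monotone fun i => Real.log (L (i + 1)) - Real.log (L i) := by
  refine monotone_nat_of_le_succ fun i => ?_
  have h := Real.log_le_log (pow_pos (hpos (i + 1)) 2) (hL (i + 1) (by omega))
  rw [Real.log_pow, Real.log_mul (hpos _).ne' (hpos _).ne', Nat.add_sub_cancel] at h
  push_cast at h
  linarith

lemma pow_le_pow_mul_pow (hL : IsLogConvexSeq L) (hpos : ∀ q, 0 < L q) {p q : ℕ} (hpq : p ≤ q) :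
    L p ^ q ≤ L 0 ^ (q - p) * L q ^ p := by
  have h0 := hpos 0
  have hp := hpos p
  have hq := hpos q
  rw [← Real.log_le_log_iff (by positivity) (by positivity), Real.log_mul (by positivity)
    (by positivity), Real.log_pow, Real.log_pow, Real.log_pow, Nat.cast_sub hpq]
  exact mul_le_of_monotone_succ_sub (f := fun i => Real.log (L i))
    (hL.monotone_log_succ_sub_log hpos) hpq

lemma le_mul_pow_of_le_pow (hL : IsLogConvexSeq L) (hpos : ∀ q, 0 < L q) {C b : ℝ}
    (hC : 1 ≤ C) (hL0 : L 0 ≤ C) (hb : 0 ≤ b) {p q : ℕ} (hp : 1 ≤ p) (hpq : p ≤ q)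
    (hLq : L q ≤ b ^ q) : L p ≤ C * b ^ p := by
  refine le_of_pow_le_pow_left₀ (by omega : q ≠ 0) (by positivity) ?_
  calc L p ^ q ≤ L 0 ^ (q - p) * L q ^ p := hL.pow_le_pow_mul_pow hpos hpq
    _ ≤ C ^ q * (b ^ q) ^ p := by
        refine mul_le_mul ?_ (pow_le_pow_left₀ (hpos q).le hLq p) (pow_pos (hpos q) p).le
          (by positivity)
        calc L 0 ^ (q - p) ≤ C ^ (q - p) := pow_le_pow_left₀ (hpos 0).le hL0 _
          _ ≤ C ^ q := pow_le_pow_right₀ hC (Nat.sub_le q p)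
    _ = (C * b ^ p) ^ q := by rw [mul_pow, ← pow_mul, ← pow_mul, Nat.mul_comm]

end IsLogConvexSeq

lemma isLogConvexSeq_const_mul_pow (a c : ℝ) : IsLogConvexSeq fun q => a * c ^ q := by
  rintro q hq
  obtain ⟨k, rfl⟩ := Nat.exists_eq_add_of_le' hq
  simp only [Nat.add_sub_cancel]
  exact le_of_eq (by ring)

lemma exists_pos_mul_le_of_eventually_le {u v : ℕ → ℝ} (hu : ∀ p, 0 < u p) (hv : ∀ p, 0 < v p)
    (h : ∀ᶠ p in atTop, v p ≤ u p) : ∃ a, 0 < a ∧ ∀ p, a * v p ≤ u p := by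
  obtain ⟨N, hN⟩ := h.exists_forall_of_atTop
  obtain ⟨m, -, hm⟩ := (Finset.range (N + 1)).exists_min_image (fun p => u p / v p) ⟨0, by simp⟩
  refine ⟨min 1 (u m / v m), lt_min one_pos (div_pos (hu m) (hv m)), fun p => ?_⟩
  rcases lt_or_ge p N with hpN | hpN
  · calc min 1 (u m / v m) * v p ≤ u p / v p * v p :=
          mul_le_mul_of_nonneg_right
            ((min_le_right _ _).trans (hm p (Finset.mem_range.2 (by omega)))) (hv p).le
      _ = u p := div_mul_cancel₀ _ (hv p).ne'
  · calc min 1 (u m / v m) * v p ≤ 1 * v p :=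
          mul_le_mul_of_nonneg_right (min_le_left _ _) (hv p).le
      _ ≤ u p := (one_mul (v p)).trans_le (hN p hpN)

section Mlc

variable {M : ℕ → ℝ}

lemma le_Mlc {L : ℕ → ℝ} (hpos : ∀ q, 0 < L q) (hL : IsLogConvexSeq L) (hLM : ∀ q, L q ≤ M q)
    (p : ℕ) : L p ≤ Mlc M p :=
  le_csSup ⟨M p, by rintro x ⟨L', -, -, hL'M, rfl⟩; exact hL'M p⟩ ⟨L, hpos, hL, hLM, rfl⟩

lemma Mlc_le {p : ℕ} {B : ℝ} (hB : 0 ≤ B)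
    (h : ∀ L : ℕ → ℝ, (∀ q, 0 < L q) → IsLogConvexSeq L → (∀ q, L q ≤ M q) → L p ≤ B) :
    Mlc M p ≤ B :=
  Real.sSup_le (by rintro x ⟨L, hpos, hL, hLM, rfl⟩; exact h L hpos hL hLM) hB

lemma Mlc_nonneg (p : ℕ) : 0 ≤ Mlc M p :=
  Real.sSup_nonneg (by rintro x ⟨L, hpos, -, -, rfl⟩; exact (hpos p).le)

lemma exists_pos_mul_pow_le_Mlc (hM : ∀ p, 0 < M p) {c : ℝ} (hc : 0 < c)
    (h : ∀ᶠ p in atTop, c ^ p ≤ M p) : ∃ a, 0 < a ∧ ∀ p, a * c ^ p ≤ Mlc M p := by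
  obtain ⟨a, ha, haM⟩ := exists_pos_mul_le_of_eventually_le hM (pow_pos hc) h
  exact ⟨a, ha, le_Mlc (fun q => by positivity) (isLogConvexSeq_const_mul_pow a c) haM⟩

lemma Mlc_le_mul_pow {b : ℝ} (hb : 0 ≤ b) (h : ∃ᶠ q in atTop, M q ≤ b ^ q) {p : ℕ} (hp : 1 ≤ p) :
    Mlc M p ≤ max 1 (M 0) * b ^ p := by
  obtain ⟨q, hMq, hpq⟩ := (h.and_eventually (eventually_ge_atTop p)).exists
  refine Mlc_le (by positivity) fun L hpos hL hLM => ?_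
  exact hL.le_mul_pow_of_le_pow hpos (le_max_left _ _) ((hLM 0).trans (le_max_right _ _)) hb hp
    hpq ((hLM q).trans hMq)

end Mlc

lemma tendsto_mul_pow_rpow_one_div {a c : ℝ} (ha : 0 < a) (hc : 0 ≤ c) :
    Tendsto (fun p : ℕ => (a * c ^ p) ^ (1 / (p : ℝ))) atTop (nhds c) := by
  have hroot : Tendsto (fun p : ℕ => a ^ (1 / (p : ℝ))) atTop (nhds 1) := by
    simpa using tendsto_const_nhds.rpow tendsto_one_div_atTop_nhds_zero_nat (Or.inl ha.ne')
  have hlim : Tendsto (fun p : ℕ => a ^ (1 / (p : ℝ)) * c) atTop (nhds c) := by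
    simpa using hroot.mul_const c
  refine hlim.congr' ?_
  filter_upwards [eventually_ge_atTop 1] with p hp
  rw [Real.mul_rpow ha.le (by positivity), one_div, Real.pow_rpow_inv_natCast hc (by omega)]

lemma pow_le_of_le_rpow_one_div {x y : ℝ} (hx : 0 ≤ x) (hy : 0 ≤ y) {p : ℕ} (hp : p ≠ 0)
    (h : x ≤ y ^ (1 / (p : ℝ))) : x ^ p ≤ y := by
  simpa only [one_div, Real.rpow_inv_natCast_pow hy hp] using pow_le_pow_left₀ hx h p

lemma le_pow_of_rpow_one_div_le {x y : ℝ} (hy : 0 ≤ y) {p : ℕ} (hp : p ≠ 0)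
    (h : y ^ (1 / (p : ℝ)) ≤ x) : y ≤ x ^ p := by
  simpa only [one_div, Real.rpow_inv_natCast_pow hy hp] using
    pow_le_pow_left₀ (Real.rpow_nonneg hy _) h p

lemma eventually_pow_le_of_lt_liminf {M : ℕ → ℝ} {l : ℝ}
    (hl : liminf (fun p : ℕ => ((M p ^ (1 / (p : ℝ)) : ℝ) : EReal)) atTop = (l : EReal))
    (hM : ∀ p, 0 ≤ M p) {c : ℝ} (hc : 0 ≤ c) (hcl : c < l) :
    ∀ᶠ p in atTop, c ^ p ≤ M p := by
  have h := eventually_lt_of_lt_liminf (hl ▸ EReal.coe_lt_coe_iff.2 hcl :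
    (c : EReal) < liminf (fun p : ℕ => ((M p ^ (1 / (p : ℝ)) : ℝ) : EReal)) atTop)
  filter_upwards [h, eventually_ge_atTop 1] with p hp hp1
  exact pow_le_of_le_rpow_one_div hc (hM p) (by omega) (EReal.coe_lt_coe_iff.1 hp).le

lemma frequently_le_pow_of_liminf_lt {M : ℕ → ℝ} {l : ℝ}
    (hl : liminf (fun p : ℕ => ((M p ^ (1 / (p : ℝ)) : ℝ) : EReal)) atTop = (l : EReal))
    (hM : ∀ p, 0 ≤ M p) {b : ℝ} (hlb : l < b) :
    ∃ᶠ q in atTop, M q ≤ b ^ q := by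
  have h := frequently_lt_of_liminf_lt (by isBoundedDefault) (hl ▸ EReal.coe_lt_coe_iff.2 hlb :
    liminf (fun p : ℕ => ((M p ^ (1 / (p : ℝ)) : ℝ) : EReal)) atTop < b)
  refine (h.and_eventually (eventually_ge_atTop 1)).mono fun q ⟨hq, hq1⟩ => ?_
  exact le_pow_of_rpow_one_div_le (hM q) (by omega) (EReal.coe_lt_coe_iff.1 hq).le

theorem lc_minorant_roots_tendsto_liminf
    (M : ℕ → ℝ) (hM : ∀ p, 0 < M p) (l : ℝ) (hlpos : 0 < l)
    (hliminf : liminf (fun p : ℕ => ((M p ^ (1 / (p : ℝ)) : ℝ) : EReal)) atTop = (l : EReal)) :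
    Tendsto (fun p : ℕ => (Mlc M p) ^ (1 / (p : ℝ))) atTop (nhds l) := by
  have hM0 : ∀ p, 0 ≤ M p := fun p => (hM p).le
  refine tendsto_order.2 ⟨fun c hc => ?_, fun b hb => ?_⟩
  · obtain ⟨c', hcc', hc'l⟩ := exists_between (max_lt hc hlpos)
    have hc' : 0 < c' := (le_max_right _ _).trans_lt hcc'
    obtain ⟨a, ha, haM⟩ := exists_pos_mul_pow_le_Mlc hM hc'
      (eventually_pow_le_of_lt_liminf hliminf hM0 hc'.le hc'l)
    have hlim := tendsto_mul_pow_rpow_one_div ha hc'.le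
    filter_upwards [(tendsto_order.1 hlim).1 c ((le_max_left _ _).trans_lt hcc')] with p hp
    exact hp.trans_le (Real.rpow_le_rpow (by positivity) (haM p) (by positivity))
  · obtain ⟨b', hlb', hb'b⟩ := exists_between hb
    have hb' : 0 ≤ b' := hlpos.le.trans hlb'.le
    have hfreq := frequently_le_pow_of_liminf_lt hliminf hM0 hlb'
    have hlim := tendsto_mul_pow_rpow_one_div (lt_max_of_lt_left one_pos : 0 < max 1 (M 0)) hb'
    filter_upwards [(tendsto_order.1 hlim).2 b hb'b, eventually_ge_atTop 1] with p hp hp1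
    exact (Real.rpow_le_rpow (Mlc_nonneg p) (Mlc_le_mul_pow hb' hfreq hp1)
      (by positivity)).trans_lt hp
end

section
/- Let M be a sequence of positive reals with 0 < L := liminf (M_p)^{1/p} < ∞ and M^{lc} its log-convex minorant. Then M^{lc}_p ≤ M_0 · L^p for all p ∈ ℕ. -/
open Filter

/-- key auxiliary lemma: any positive log-convex minorant satisfies the bound. -/
lemma aux_bound (M : ℕ → ℝ) (hM : ∀ p, 0 < M p) (l : ℝ) (hlpos : 0 < l)
    (hliminf : liminf (fun p : ℕ => ((M p ^ (1 / (p : ℝ)) : ℝ) : EReal)) atTop = (l : EReal))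
    (L : ℕ → ℝ) (hpos : ∀ q, 0 < L q)
    (hconv : ∀ q : ℕ, 1 ≤ q → (L q) ^ 2 ≤ L (q - 1) * L (q + 1))
    (hle : ∀ q, L q ≤ M q) (p : ℕ) : L p ≤ M 0 * l ^ p := by
  rcases Nat.eq_zero_or_pos p with rfl | hp
  · simpa using hle 0
  by_contra hcon
  push_neg at hcon
  set R : ℕ → ℝ := fun q => L (q + 1) / L q with hR
  have hRpos : ∀ q, 0 < R q := fun q => div_pos (hpos _) (hpos _)
  have hRmono : Monotone R := by
    apply monotone_nat_of_le_succ
    intro n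
    have h := hconv (n + 1) (Nat.le_add_left 1 n)
    simp only [Nat.add_sub_cancel] at h
    rw [hR]
    rw [div_le_div_iff₀ (hpos n) (hpos (n+1))]
    nlinarith [hpos n, hpos (n+1), hpos (n+2)]
  set r : ℝ := R (p - 1) with hr
  have hrpos : 0 < r := hRpos _
  -- L n ≤ L 0 * r ^ n for n ≤ p
  have claim1 : ∀ n, n ≤ p → L n ≤ L 0 * r ^ n := by
    intro n hn
    induction n with
    | zero => simp
    | succ k ih =>
      have hk : k ≤ p := Nat.le_of_succ_le hn
      have hRk : R k ≤ r := hRmono (by omega)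
      have hLk : L (k + 1) = L k * R k := by
        simp only [hR]; rw [mul_comm, div_mul_cancel₀ _ (hpos k).ne']
      rw [hLk, pow_succ]
      calc L k * R k ≤ (L 0 * r ^ k) * R k :=
            mul_le_mul_of_nonneg_right (ih hk) (hRpos k).le
        _ ≤ (L 0 * r ^ k) * r := by
            apply mul_le_mul_of_nonneg_left hRk
            exact mul_nonneg (hpos 0).le (by positivity)
        _ = L 0 * (r ^ k * r) := by ring
  -- L p * r ^ (q - p) ≤ L q for q ≥ p
  have claim2 : ∀ q, p ≤ q → L p * r ^ (q - p) ≤ L q := by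
    intro q hq
    induction q with
    | zero => simp [Nat.le_zero.mp hq]
    | succ k ih =>
      rcases Nat.lt_or_ge p (k + 1) with h | h
      · have hk : p ≤ k := Nat.lt_succ_iff.mp h
        have hRk : r ≤ R k := hRmono (by omega)
        have hLk : L (k + 1) = L k * R k := by
          simp only [hR]; rw [mul_comm, div_mul_cancel₀ _ (hpos k).ne']
        have : k + 1 - p = (k - p) + 1 := by omega
        rw [this, hLk, pow_succ, ← mul_assoc]
        calc L p * r ^ (k - p) * r ≤ L k * r := by
              apply mul_le_mul_of_nonneg_right (ih hk) hrpos.le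
          _ ≤ L k * R k := mul_le_mul_of_nonneg_left hRk (hpos k).le
      · have : p = k + 1 := by omega
        subst this; simp
  -- l < r
  have hL0 : L 0 ≤ M 0 := hle 0
  have hlp : l ^ p < r ^ p := by
    have h1 : L p ≤ M 0 * r ^ p := by
      calc L p ≤ L 0 * r ^ p := claim1 p le_rfl
        _ ≤ M 0 * r ^ p := mul_le_mul_of_nonneg_right hL0 (by positivity)
    have hM0 : 0 < M 0 := hM 0
    have := lt_of_lt_of_le hcon h1
    exact lt_of_mul_lt_mul_left this hM0.le
  have hlr : l < r := by
    by_contra h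
    push_neg at h
    exact absurd (pow_le_pow_left₀ hrpos.le h p) (not_le.mpr hlp)
  -- set c, show M q ≥ c * r ^ q eventually
  set c : ℝ := L p / r ^ p with hc
  have hcpos : 0 < c := div_pos (hpos p) (by positivity)
  have hMlow : ∀ q, p ≤ q → c * r ^ q ≤ M q := by
    intro q hq
    have : c * r ^ q = L p * r ^ (q - p) := by
      have hpow : r ^ q = r ^ (q - p) * r ^ p := by
        rw [← pow_add]; congr 1; omega
      rw [hc, hpow]
      field_simp
    rw [this]
    exact (claim2 q hq).trans (hle q)
  -- liminf comparison
  have hgrow : ∀ᶠ q : ℕ in atTop,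
      ((c ^ (1 / (q : ℝ)) * r : ℝ) : EReal) ≤ ((M q ^ (1 / (q : ℝ)) : ℝ) : EReal) := by
    filter_upwards [eventually_ge_atTop (max p 1)] with q hq
    have hq1 : 1 ≤ q := le_of_max_le_right hq
    have hqp : p ≤ q := le_of_max_le_left hq
    have hqR : (0:ℝ) < q := by exact_mod_cast hq1
    rw [EReal.coe_le_coe_iff]
    have h1 : (c * r ^ q) ^ (1 / (q : ℝ)) ≤ M q ^ (1 / (q : ℝ)) :=
      Real.rpow_le_rpow (by positivity) (hMlow q hqp) (by positivity)
    calc c ^ (1 / (q : ℝ)) * r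
        = (c * r ^ q) ^ (1 / (q : ℝ)) := by
          rw [Real.mul_rpow hcpos.le (by positivity), ← Real.rpow_natCast r q,
            ← Real.rpow_mul hrpos.le]
          rw [mul_one_div, div_self (ne_of_gt hqR), Real.rpow_one]
      _ ≤ M q ^ (1 / (q : ℝ)) := h1
  have htend : Tendsto (fun q : ℕ => ((c ^ (1 / (q : ℝ)) * r : ℝ) : EReal)) atTop
      (nhds (r : EReal)) := by
    rw [EReal.tendsto_coe]
    have h1 : Tendsto (fun q : ℕ => (1 / (q : ℝ))) atTop (nhds 0) :=
      tendsto_one_div_atTop_nhds_zero_nat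
    have h2 : Tendsto (fun q : ℕ => c ^ (1 / (q : ℝ))) atTop (nhds 1) := by
      have h3 : Tendsto (fun q : ℕ => Real.log c * (1 / (q : ℝ))) atTop (nhds 0) := by
        simpa using h1.const_mul (Real.log c)
      have h4 := (Real.continuous_exp.tendsto 0).comp h3
      simp only [Function.comp_def, Real.exp_zero] at h4
      refine h4.congr fun q => ?_
      rw [Real.rpow_def_of_pos hcpos]
    have := h2.mul_const r
    simpa using this
  have hliminf2 : liminf (fun q : ℕ => ((c ^ (1 / (q : ℝ)) * r : ℝ) : EReal)) atTop
      = (r : EReal) := htend.liminf_eq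
  have hge : (r : EReal) ≤ (l : EReal) := by
    rw [← hliminf, ← hliminf2]
    exact liminf_le_liminf hgrow
  exact absurd (EReal.coe_le_coe_iff.mp hge) (not_le.mpr hlr)

theorem lc_minorant_geometric_bound
    (M : ℕ → ℝ) (hM : ∀ p, 0 < M p) (l : ℝ) (hlpos : 0 < l)
    (hliminf : liminf (fun p : ℕ => ((M p ^ (1 / (p : ℝ)) : ℝ) : EReal)) atTop = (l : EReal)) :
    ∀ p : ℕ, Mlc M p ≤ M 0 * l ^ p := by
  intro p
  apply Real.sSup_le
  · rintro x ⟨L, hpos, hconv, hle, rfl⟩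
    exact aux_bound M hM l hlpos hliminf L hpos hconv hle p
  · exact mul_nonneg (hM 0).le (by positivity)
end
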